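/- arXiv:2103.07591 — 4 statements merged into one kernel-verified Lean document; each statement's English description precedes it below -/
import Mathlib

section
/- Let C_0 and C_1 be quantum combs on ⊗_{j=1}^N (H_j^out ⊗ H_j^in) and let ε ∈ (0,1). Then D̃_max^{εD}(C_0||C_1) ≤ D_max^ε(C_0||C_1), where D = ∏_{j=1}^N dim(H_j^out), D_max^ε is the smooth max-relative entropy over combs, and D̃_max is the revised smooth max-relative entropy. -/
open Matrix Filter
open scoped ComplexOrder

attribute [local instance] Classical.propDecidable

noncomputable section

namespace QComb

/-- Dimension of the `j`-th factor of the partial tensor product keeping only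
the first `n` factors (the remaining factors are replaced by trivial spaces). -/
def cut {N : ℕ} (d : Fin N → ℕ) (n : ℕ) (j : Fin N) : ℕ := if j.val < n then d j else 1

/-- Index set of the tensor product of the first `n` factors of the family of
Hilbert spaces `ℂ^{d j}`, `j : Fin N`. -/
def CutIdx {N : ℕ} (d : Fin N → ℕ) (n : ℕ) : Type := ∀ j : Fin N, Fin (cut d n j)

instance {N : ℕ} (d : Fin N → ℕ) (n : ℕ) : Fintype (CutIdx d n) := Pi.instFintype

instance {N : ℕ} (d : Fin N → ℕ) (n : ℕ) : DecidableEq (CutIdx d n) :=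
  fun a b => Fintype.decidablePiFintype a b

/-- Operators on the tensor product `⊗_{j<n} (H_j^out ⊗ H_j^in)` where
`H_j^out = ℂ^{dO j}` and `H_j^in = ℂ^{dI j}`. -/
abbrev CMat {N : ℕ} (dO dI : Fin N → ℕ) (n : ℕ) : Type :=
  Matrix (CutIdx dO n × CutIdx dI n) (CutIdx dO n × CutIdx dI n) ℂ

/-- Extend an index on the first `n` factors by a value `k` in the `n`-th factor. -/
def extendAt {N : ℕ} (d : Fin N → ℕ) (n : Fin N) (x : CutIdx d n.val) (k : Fin (d n)) :
    CutIdx d (n.val + 1) := fun j =>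
  if h : j.val < n.val then
    Fin.cast (show cut d n.val j = cut d (n.val + 1) j by
      simp [cut, h, Nat.lt_succ_of_lt h]) (x j)
  else if h2 : j.val < n.val + 1 then
    Fin.cast (show d n = cut d (n.val + 1) j by
      have hje : j = n := Fin.ext (by omega)
      subst hje; simp [cut, h2]) k
  else
    Fin.cast (show cut d n.val j = cut d (n.val + 1) j by simp [cut, h, h2]) (x j)

/-- Restrict an index on the first `n+1` factors to the first `n` factors. -/
def restrictAt {N : ℕ} (d : Fin N → ℕ) (n : Fin N) (x : CutIdx d (n.val + 1)) :
    CutIdx d n.val := fun j =>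
  if h : j.val < n.val then
    Fin.cast (show cut d (n.val + 1) j = cut d n.val j by
      simp [cut, h, Nat.lt_succ_of_lt h]) (x j)
  else
    ⟨0, by simp only [cut, if_neg h]; omega⟩

/-- The component of an index on the first `n+1` factors in the `n`-th factor. -/
def componentAt {N : ℕ} (d : Fin N → ℕ) (n : Fin N) (x : CutIdx d (n.val + 1)) :
    Fin (d n) :=
  Fin.cast (show cut d (n.val + 1) n = d n by simp [cut]) (x n)

/-- Partial trace over the `n`-th output space. -/
def ptraceO {N : ℕ} (dO : Fin N → ℕ) (n : Fin N) {β : Type} [Fintype β]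
    (M : Matrix (CutIdx dO (n.val + 1) × β) (CutIdx dO (n.val + 1) × β) ℂ) :
    Matrix (CutIdx dO n.val × β) (CutIdx dO n.val × β) ℂ :=
  fun p q => ∑ k : Fin (dO n), M (extendAt dO n p.1 k, p.2) (extendAt dO n q.1 k, q.2)

/-- Partial trace over the `n`-th input space. -/
def ptraceI {N : ℕ} (dI : Fin N → ℕ) (n : Fin N) {α : Type} [Fintype α]
    (M : Matrix (α × CutIdx dI (n.val + 1)) (α × CutIdx dI (n.val + 1)) ℂ) :
    Matrix (α × CutIdx dI n.val) (α × CutIdx dI n.val) ℂ :=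
  fun p q => ∑ k : Fin (dI n), M (p.1, extendAt dI n p.2 k) (q.1, extendAt dI n q.2 k)

/-- Tensoring with the identity on the `n`-th output space. -/
def idTensorO {N : ℕ} (dO : Fin N → ℕ) (n : Fin N) {β : Type}
    (M : Matrix (CutIdx dO n.val × β) (CutIdx dO n.val × β) ℂ) :
    Matrix (CutIdx dO (n.val + 1) × β) (CutIdx dO (n.val + 1) × β) ℂ :=
  fun p q => (if componentAt dO n p.1 = componentAt dO n q.1 then (1 : ℂ) else 0) *
    M (restrictAt dO n p.1, p.2) (restrictAt dO n q.1, q.2)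

/-- Tensoring with the identity on the `n`-th input space. -/
def idTensorI {N : ℕ} (dI : Fin N → ℕ) (n : Fin N) {α : Type}
    (M : Matrix (α × CutIdx dI n.val) (α × CutIdx dI n.val) ℂ) :
    Matrix (α × CutIdx dI (n.val + 1)) (α × CutIdx dI (n.val + 1)) ℂ :=
  fun p q => (if componentAt dI n p.2 = componentAt dI n q.2 then (1 : ℂ) else 0) *
    M (p.1, restrictAt dI n p.2) (q.1, restrictAt dI n q.2)

/-- Transport an operator along an equality of the number of kept factors. -/
def castCMat {N : ℕ} (dO dI : Fin N → ℕ) {a b : ℕ} (h : a = b) (M : CMat dO dI a) :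
    CMat dO dI b := h ▸ M

/-- `C` is a quantum comb on `⊗_{j=1}^N (H_j^out ⊗ H_j^in)`:
it is positive semidefinite and admits a chain `C⁽ⁿ⁾` of positive semidefinite operators with
`C⁽ᴺ⁾ = C`, `C⁽⁰⁾ = 1` and `Tr_{H_n^out} C⁽ⁿ⁾ = I_{H_n^in} ⊗ C⁽ⁿ⁻¹⁾`. -/
def IsQuantumComb {N : ℕ} (dO dI : Fin N → ℕ) (C : CMat dO dI N) : Prop :=
  C.PosSemidef ∧ ∃ Cn : (n : ℕ) → CMat dO dI n,
    (∀ n ≤ N, (Cn n).PosSemidef) ∧ Cn N = C ∧ Cn 0 = 1 ∧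
    ∀ n : Fin N, ptraceO dO n (Cn (n.val + 1)) = idTensorI dI n (Cn n.val)

/-- `Γ` is a dual comb: `Γ = I_{H_N^out} ⊗ Γ⁽ᴺ⁾` for a chain of positive semidefinite operators
`Γ⁽ⁿ⁾` on `H_n^in ⊗ (⊗_{j<n} (H_j^out ⊗ H_j^in))` with
`Tr_{H_n^in} Γ⁽ⁿ⁾ = I_{H_{n-1}^out} ⊗ Γ⁽ⁿ⁻¹⁾` and `Tr_{H_1^in} Γ⁽¹⁾ = 1`.
Here `G m` plays the role of `Γ⁽ᵐ⁺¹⁾`. -/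
def IsDualComb {N : ℕ} (dO dI : Fin N → ℕ) (Γ : CMat dO dI N) : Prop :=
  ∃ G : (m : ℕ) → Matrix (CutIdx dO m × CutIdx dI (m + 1)) (CutIdx dO m × CutIdx dI (m + 1)) ℂ,
    (∀ m < N, (G m).PosSemidef) ∧
    (∀ h0 : 0 < N, ptraceI dI ⟨0, h0⟩ (G 0) = 1) ∧
    (∀ m, ∀ h : m + 1 < N,
      ptraceI dI ⟨m + 1, h⟩ (G (m + 1)) = idTensorO dO ⟨m, Nat.lt_of_succ_lt h⟩ (G m)) ∧
    (∀ m, ∀ h : m + 1 = N,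
      Γ = castCMat dO dI h (idTensorO dO ⟨m, h ▸ Nat.lt_succ_self m⟩ (G m))) ∧
    (N = 0 → Γ = 1)

/-- The trace norm `‖A‖₁ = Tr √(AᴴA)`. -/
def traceNorm {ι : Type} [Fintype ι] [DecidableEq ι] (A : Matrix ι ι ℂ) : ℝ :=
  (((Matrix.posSemidef_conjTranspose_mul_self A).1.eigenvectorUnitary : Matrix ι ι ℂ) *
    Matrix.diagonal (fun i => ((√((Matrix.posSemidef_conjTranspose_mul_self A).1.eigenvalues i) : ℝ) : ℂ)) *
    (star (Matrix.posSemidef_conjTranspose_mul_self A).1.eigenvectorUnitary : Matrix ι ι ℂ)).trace.re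

/-- Square root of a positive semidefinite matrix (junk value `0` otherwise). -/
def msqrt {ι : Type} [Fintype ι] [DecidableEq ι] (A : Matrix ι ι ℂ) : Matrix ι ι ℂ :=
  if h : A.PosSemidef then (h.1.eigenvectorUnitary : Matrix ι ι ℂ) *
    Matrix.diagonal ((↑) ∘ (√·) ∘ h.1.eigenvalues) *
    (star h.1.eigenvectorUnitary : Matrix ι ι ℂ) else 0

/-- Positive part `A₊` of a Hermitian matrix (junk value `0` otherwise). -/
def posPartMat {ι : Type} [Fintype ι] [DecidableEq ι] (A : Matrix ι ι ℂ) : Matrix ι ι ℂ :=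
  if h : A.IsHermitian then h.cfc (fun x => max x 0) else 0

/-- Matrix logarithm in base 2 of a Hermitian matrix via the functional calculus
(junk value `0` otherwise). -/
def mlog {ι : Type} [Fintype ι] [DecidableEq ι] (A : Matrix ι ι ℂ) : Matrix ι ι ℂ :=
  if h : A.IsHermitian then h.cfc (Real.logb 2) else 0

/-- Quantum relative entropy `D(ρ‖σ) = Tr[ρ (log ρ - log σ)]` (base-2 logarithm). -/
def relEnt {ι : Type} [Fintype ι] [DecidableEq ι] (ρ σ : Matrix ι ι ℂ) : ℝ :=
  ((ρ * (mlog ρ - mlog σ)).trace).re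

/-- Support inclusion `supp A ⊆ supp B` (ranges of the associated linear maps). -/
def suppSubset {ι : Type} [Fintype ι] [DecidableEq ι] (A B : Matrix ι ι ℂ) : Prop :=
  LinearMap.range (Matrix.toLin' A) ≤ LinearMap.range (Matrix.toLin' B)

/-- The feasible set of the max-relative entropy `D_max(A‖B)`. -/
def DmaxSet {ι : Type} [Fintype ι] [DecidableEq ι] (A B : Matrix ι ι ℂ) : Set ℝ :=
  {lam : ℝ | 0 ≤ lam ∧ ((lam : ℂ) • B - A).PosSemidef}

/-- Max-relative entropy `D_max(A‖B) = log min {λ ≥ 0 | λB - A ≥ 0}`, equal to `⊤`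
when no such `λ` exists (i.e. when `supp A ⊄ supp B`). -/
def Dmax {ι : Type} [Fintype ι] [DecidableEq ι] (A B : Matrix ι ι ℂ) : EReal :=
  if (DmaxSet A B).Nonempty then ((Real.logb 2 (sInf (DmaxSet A B)) : ℝ) : EReal) else ⊤

/-- Smooth max-relative entropy of quantum combs:
`D_max^ε(C₀‖C₁) = min { D_max(C̃‖C₁) | C̃ a quantum comb, ½‖C̃ - C₀‖₁ ≤ ε }`. -/
def DmaxSmoothComb {N : ℕ} (dO dI : Fin N → ℕ) (ε : ℝ) (C0 C1 : CMat dO dI N) : EReal :=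
  sInf { x : EReal | ∃ C : CMat dO dI N, IsQuantumComb dO dI C ∧
    traceNorm (C - C0) ≤ 2 * ε ∧ x = Dmax C C1 }

/-- Revised smooth max-relative entropy of quantum combs:
`D̃_max^ε(C₀‖C₁) = max_Γ min { D_max(C‖√Γ C₁ √Γ) | C ≥ 0, Tr C = 1,
½‖√Γ C₀ √Γ - C‖₁ ≤ ε }`, the max over dual combs `Γ`. -/
def DmaxTilde {N : ℕ} (dO dI : Fin N → ℕ) (ε : ℝ) (C0 C1 : CMat dO dI N) : EReal :=
  sSup { x : EReal | ∃ Γ : CMat dO dI N, IsDualComb dO dI Γ ∧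
    x = sInf { y : EReal | ∃ C : CMat dO dI N, C.PosSemidef ∧ C.trace = 1 ∧
      traceNorm (msqrt Γ * C0 * msqrt Γ - C) ≤ 2 * ε ∧
      y = Dmax C (msqrt Γ * C1 * msqrt Γ) } }

/-- Hypothesis-testing quantity
`β_δ(C₀‖C₁) = min { Tr[Π √Γ C₁ √Γ] | 0 ≤ Π ≤ I, Γ dual comb, Tr[(I-Π) √Γ C₀ √Γ] ≤ δ }`. -/
def betaHT {N : ℕ} (dO dI : Fin N → ℕ) (δ : ℝ) (C0 C1 : CMat dO dI N) : ℝ :=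
  sInf { b : ℝ | ∃ P Γ : CMat dO dI N, P.PosSemidef ∧ ((1 : CMat dO dI N) - P).PosSemidef ∧
    IsDualComb dO dI Γ ∧
    (((1 - P) * (msqrt Γ * C0 * msqrt Γ)).trace).re ≤ δ ∧
    b = ((P * (msqrt Γ * C1 * msqrt Γ)).trace).re }

/-- Maximum score `w_max(Ω) = max { Tr(Ω C) | C a quantum comb }`. -/
def wmax {N : ℕ} (dO dI : Fin N → ℕ) (Ω : CMat dO dI N) : ℝ :=
  sSup { w : ℝ | ∃ C : CMat dO dI N, IsQuantumComb dO dI C ∧ w = ((Ω * C).trace).re }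

/-- Smooth maximum score `w_max^ε(Ω) = sup { w_max(Ω') | Ω' ≥ 0, Tr Ω' = Tr Ω,
½‖Ω - Ω'‖₁ ≤ ε }`. -/
def wmaxSmooth {N : ℕ} (dO dI : Fin N → ℕ) (ε : ℝ) (Ω : CMat dO dI N) : ℝ :=
  sSup { w : ℝ | ∃ Ω' : CMat dO dI N, Ω'.PosSemidef ∧ traceNorm (Ω - Ω') ≤ 2 * ε ∧
    Ω'.trace = Ω.trace ∧ w = wmax dO dI Ω' }

/-- Dimension function of the `n`-fold concatenated network. -/
def repDim {N : ℕ} (n : ℕ) (d : Fin N → ℕ) : Fin (n * N) → ℕ :=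
  fun j => d ⟨j.val % N, Nat.mod_lt _ (Nat.pos_of_ne_zero fun h =>
    Nat.not_lt_zero j.val (by simpa [h] using j.isLt))⟩

/-- Extract the `i`-th copy of an index of the `n`-fold concatenated network. -/
def sliceIdx {N : ℕ} (n : ℕ) (d : Fin N → ℕ) (i : Fin n) (x : CutIdx (repDim n d) (n * N)) :
    CutIdx d N := fun j =>
  Fin.cast (by
    have hj := j.isLt
    have h1 : (i.val + 1) * N ≤ n * N := Nat.mul_le_mul_right N i.isLt
    have h2 : (i.val + 1) * N = i.val * N + N := Nat.succ_mul _ _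
    have hb : i.val * N + j.val < n * N := by omega
    have hm : (i.val * N + j.val) % N = j.val := by
      rw [Nat.add_comm, Nat.add_mul_mod_self_right]; exact Nat.mod_eq_of_lt hj
    show cut (repDim n d) (n * N) ⟨i.val * N + j.val, hb⟩ = cut d N j
    simp only [cut, repDim, if_pos hb, if_pos hj]
    exact congrArg d (Fin.ext hm))
    (x ⟨i.val * N + j.val, by
      have hj := j.isLt
      have h1 : (i.val + 1) * N ≤ n * N := Nat.mul_le_mul_right N i.isLt
      have h2 : (i.val + 1) * N = i.val * N + N := Nat.succ_mul _ _
      omega⟩)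

/-- The `n`-fold tensor power `Ω^{⊗n}` on the `n`-fold concatenated network. -/
def tpow {N : ℕ} (dO dI : Fin N → ℕ) (n : ℕ) (Ω : CMat dO dI N) :
    CMat (repDim n dO) (repDim n dI) (n * N) :=
  fun p q => ∏ i : Fin n,
    Ω (sliceIdx n dO i p.1, sliceIdx n dI i p.2) (sliceIdx n dO i q.1, sliceIdx n dI i q.2)

/-- Extract the left part of an index of the concatenation of two networks. -/
def appendIdxL {N M : ℕ} (d : Fin N → ℕ) (e : Fin M → ℕ)
    (x : CutIdx (Fin.append d e) (N + M)) : CutIdx d N := fun j =>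
  Fin.cast (by
    show cut (Fin.append d e) (N + M) (Fin.castAdd M j) = cut d N j
    simp only [cut, if_pos (Fin.castAdd M j).isLt, if_pos j.isLt]
    exact Fin.append_left d e j) (x (Fin.castAdd M j))

/-- Extract the right part of an index of the concatenation of two networks. -/
def appendIdxR {N M : ℕ} (d : Fin N → ℕ) (e : Fin M → ℕ)
    (x : CutIdx (Fin.append d e) (N + M)) : CutIdx e M := fun j =>
  Fin.cast (by
    show cut (Fin.append d e) (N + M) (Fin.natAdd N j) = cut e M j
    simp only [cut, if_pos (Fin.natAdd N j).isLt, if_pos j.isLt]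
    exact Fin.append_right d e j) (x (Fin.natAdd N j))

/-- The tensor product `C ⊗ C'` of operators on two networks, as an operator on the
concatenated network with `N + M` steps. -/
def tens2 {N M : ℕ} {dO dI : Fin N → ℕ} {eO eI : Fin M → ℕ}
    (C : CMat dO dI N) (C' : CMat eO eI M) :
    CMat (Fin.append dO eO) (Fin.append dI eI) (N + M) :=
  fun p q =>
    C (appendIdxL dO eO p.1, appendIdxL dI eI p.2) (appendIdxL dO eO q.1, appendIdxL dI eI q.2) *
    C' (appendIdxR dO eO p.1, appendIdxR dI eI p.2) (appendIdxR dO eO q.1, appendIdxR dI eI q.2)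

/-!
Fix a dual comb `Γ` and a comb `C̃` with `½‖C̃ - C₀‖₁ ≤ ε`. The operator `√Γ C̃ √Γ` is feasible
for the inner minimum of `D̃_max^{εD}`: it is positive, its trace `Tr(Γ C̃)` equals `1` by
telescoping the normalisation conditions of the two chains, and
`‖√Γ (C₀ - C̃) √Γ‖₁ ≤ Tr Γ · ‖C₀ - C̃‖₁ = D · ‖C₀ - C̃‖₁`. Conjugating `λ C₁ - C̃ ≥ 0` by `√Γ`
shows that its `D_max` relative to `√Γ C₁ √Γ` is at most `D_max(C̃‖C₁)`.
-/

section CutIdx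
variable {N : ℕ} (d : Fin N → ℕ) (n : Fin N)

lemma restrictAt_extendAt (x : CutIdx d n.val) (k : Fin (d n)) :
    restrictAt d n (extendAt d n x k) = x := by
  funext j
  by_cases h : j.val < n.val
  · simp [restrictAt, extendAt, h]
  · apply Fin.ext
    have h1 := (x j).isLt
    simp [cut, h] at h1
    simp [restrictAt, h, h1]

lemma componentAt_extendAt (x : CutIdx d n.val) (k : Fin (d n)) :
    componentAt d n (extendAt d n x k) = k := by
  apply Fin.ext
  simp [componentAt, extendAt]

lemma extendAt_restrictAt (y : CutIdx d (n.val + 1)) :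
    extendAt d n (restrictAt d n y) (componentAt d n y) = y := by
  funext j
  apply Fin.ext
  by_cases h : j.val < n.val
  · simp [extendAt, restrictAt, h]
  · by_cases h2 : j.val < n.val + 1
    · obtain rfl : j = n := Fin.ext (by omega)
      simp [extendAt, componentAt, h2]
    · have := (y j).isLt
      simp [cut, h2] at this
      simp [extendAt, restrictAt, h, h2, this]

def cutSuccEquiv : CutIdx d (n.val + 1) ≃ CutIdx d n.val × Fin (d n) where
  toFun y := (restrictAt d n y, componentAt d n y)
  invFun p := extendAt d n p.1 p.2
  left_inv := extendAt_restrictAt d n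
  right_inv p := Prod.ext (restrictAt_extendAt d n p.1 p.2) (componentAt_extendAt d n p.1 p.2)

lemma sum_cutIdx_succ {M : Type*} [AddCommMonoid M] (g : CutIdx d (n.val + 1) → M) :
    ∑ y, g y = ∑ x : CutIdx d n.val, ∑ k : Fin (d n), g (extendAt d n x k) := by
  rw [← (cutSuccEquiv d n).symm.sum_comp, Fintype.sum_prod_type]
  rfl

lemma card_cutIdx (m : ℕ) : Fintype.card (CutIdx d m) = ∏ j, cut d m j := by
  simp [CutIdx]

lemma card_cutIdx_succ :
    Fintype.card (CutIdx d (n.val + 1)) = Fintype.card (CutIdx d n.val) * d n := by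
  rw [Fintype.card_congr (cutSuccEquiv d n), Fintype.card_prod, Fintype.card_fin]

end CutIdx

section PartialTrace
variable {N : ℕ}

lemma trace_idTensorO_mul (dO : Fin N → ℕ) (n : Fin N) {β : Type} [Fintype β]
    (A : Matrix (CutIdx dO n.val × β) (CutIdx dO n.val × β) ℂ)
    (B : Matrix (CutIdx dO (n.val + 1) × β) (CutIdx dO (n.val + 1) × β) ℂ) :
    (idTensorO dO n A * B).trace = (A * ptraceO dO n B).trace := by
  simp only [Matrix.trace, Matrix.diag, Matrix.mul_apply, Fintype.sum_prod_type, ptraceO,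
    idTensorO, sum_cutIdx_succ dO n, componentAt_extendAt, restrictAt_extendAt]
  simp only [ite_mul, one_mul, zero_mul, Finset.sum_ite_irrel, Finset.sum_const_zero,
    Finset.sum_ite_eq, Finset.mem_univ, if_true, Finset.mul_sum]
  refine Finset.sum_congr rfl fun x _ => ?_
  rw [Finset.sum_comm]
  refine Finset.sum_congr rfl fun a _ => ?_
  rw [Finset.sum_comm]
  exact Finset.sum_congr rfl fun x' _ => Finset.sum_comm

lemma trace_mul_idTensorI (dI : Fin N → ℕ) (n : Fin N) {α : Type} [Fintype α]
    (A : Matrix (α × CutIdx dI (n.val + 1)) (α × CutIdx dI (n.val + 1)) ℂ)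
    (B : Matrix (α × CutIdx dI n.val) (α × CutIdx dI n.val) ℂ) :
    (A * idTensorI dI n B).trace = (ptraceI dI n A * B).trace := by
  simp only [Matrix.trace, Matrix.diag, Matrix.mul_apply, Fintype.sum_prod_type, ptraceI,
    idTensorI, sum_cutIdx_succ dI n, componentAt_extendAt, restrictAt_extendAt]
  simp only [mul_ite, mul_zero, ite_mul, one_mul, zero_mul, Finset.sum_ite_eq', Finset.mem_univ,
    if_true, Finset.sum_mul]
  refine Finset.sum_congr rfl fun a _ => Finset.sum_congr rfl fun x _ => ?_
  rw [Finset.sum_comm]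
  exact Finset.sum_congr rfl fun k _ => Finset.sum_comm

lemma trace_idTensorO (dO : Fin N → ℕ) (n : Fin N) {β : Type} [Fintype β]
    (A : Matrix (CutIdx dO n.val × β) (CutIdx dO n.val × β) ℂ) :
    (idTensorO dO n A).trace = dO n * A.trace := by
  simp [Matrix.trace, Fintype.sum_prod_type, idTensorO, sum_cutIdx_succ dO n,
    restrictAt_extendAt, Finset.mul_sum]

lemma trace_ptraceI (dI : Fin N → ℕ) (n : Fin N) {α : Type} [Fintype α]
    (A : Matrix (α × CutIdx dI (n.val + 1)) (α × CutIdx dI (n.val + 1)) ℂ) :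
    (ptraceI dI n A).trace = A.trace := by
  simp only [Matrix.trace, Matrix.diag, Fintype.sum_prod_type, ptraceI, sum_cutIdx_succ dI n]

lemma posSemidef_idTensorO (dO : Fin N → ℕ) (n : Fin N) {β : Type} [Fintype β]
    {A : Matrix (CutIdx dO n.val × β) (CutIdx dO n.val × β) ℂ} (hA : A.PosSemidef) :
    (idTensorO dO n A).PosSemidef := by
  refine .of_dotProduct_mulVec_nonneg ?_ fun x => ?_
  · ext p q
    have hs : star (A (restrictAt dO n q.1, q.2) (restrictAt dO n p.1, p.2)) =
        A (restrictAt dO n p.1, p.2) (restrictAt dO n q.1, q.2) := by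
      rw [← Matrix.conjTranspose_apply, hA.1.eq]
    simp only [idTensorO, Matrix.conjTranspose_apply, star_mul', apply_ite (star : ℂ → ℂ),
      star_one, star_zero, hs, eq_comm]
  · simp only [dotProduct, Matrix.mulVec, Fintype.sum_prod_type, idTensorO, Pi.star_apply,
      sum_cutIdx_succ dO n, componentAt_extendAt, restrictAt_extendAt, ite_mul, one_mul, zero_mul]
    rw [Finset.sum_comm]
    refine Finset.sum_nonneg fun k _ => ?_
    simpa [dotProduct, Matrix.mulVec, Fintype.sum_prod_type, Finset.mul_sum] using
      hA.dotProduct_mulVec_nonneg (fun p => x (extendAt dO n p.1 k, p.2))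

end PartialTrace

section Comb
variable {N : ℕ} (dO dI : Fin N → ℕ)

lemma trace_one_cutIdx_zero :
    (1 : Matrix (CutIdx dO 0 × CutIdx dI 0) (CutIdx dO 0 × CutIdx dI 0) ℂ).trace = 1 := by
  simp [card_cutIdx, cut]

lemma trace_dualChain
    (G : (m : ℕ) → Matrix (CutIdx dO m × CutIdx dI (m + 1)) (CutIdx dO m × CutIdx dI (m + 1)) ℂ)
    (hG0 : ∀ h0 : 0 < N, ptraceI dI ⟨0, h0⟩ (G 0) = 1)
    (hG : ∀ m, ∀ h : m + 1 < N,
      ptraceI dI ⟨m + 1, h⟩ (G (m + 1)) = idTensorO dO ⟨m, Nat.lt_of_succ_lt h⟩ (G m)) :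
    ∀ m < N, (G m).trace = Fintype.card (CutIdx dO m)
  | 0, h => by
    rw [← trace_ptraceI dI ⟨0, h⟩, hG0 h, trace_one_cutIdx_zero]
    simp [card_cutIdx, cut]
  | m + 1, h => by
    rw [← trace_ptraceI dI ⟨m + 1, h⟩, hG m h, trace_idTensorO,
      trace_dualChain G hG0 hG m (Nat.lt_of_succ_lt h), card_cutIdx_succ dO ⟨m, by omega⟩]
    push_cast
    ring

lemma trace_dualChain_mul_combChain
    (G : (m : ℕ) → Matrix (CutIdx dO m × CutIdx dI (m + 1)) (CutIdx dO m × CutIdx dI (m + 1)) ℂ)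
    (hG0 : ∀ h0 : 0 < N, ptraceI dI ⟨0, h0⟩ (G 0) = 1)
    (hG : ∀ m, ∀ h : m + 1 < N,
      ptraceI dI ⟨m + 1, h⟩ (G (m + 1)) = idTensorO dO ⟨m, Nat.lt_of_succ_lt h⟩ (G m))
    (C : (n : ℕ) → CMat dO dI n) (hC0 : C 0 = 1)
    (hC : ∀ n : Fin N, ptraceO dO n (C (n.val + 1)) = idTensorI dI n (C n.val)) :
    ∀ n, ∀ h : n < N, (idTensorO dO ⟨n, h⟩ (G n) * C (n + 1)).trace = 1
  | 0, h => by
    rw [trace_idTensorO_mul, hC ⟨0, h⟩, trace_mul_idTensorI dI ⟨0, h⟩, hG0 h, hC0, one_mul,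
      trace_one_cutIdx_zero]
  | n + 1, h => by
    rw [trace_idTensorO_mul, hC ⟨n + 1, h⟩, trace_mul_idTensorI dI ⟨n + 1, h⟩, hG n h,
      trace_dualChain_mul_combChain G hG0 hG C hC0 hC n (Nat.lt_of_succ_lt h)]

variable {dO dI}

lemma IsDualComb.posSemidef {Γ : CMat dO dI N} (hΓ : IsDualComb dO dI Γ) : Γ.PosSemidef := by
  obtain ⟨G, hGpsd, -, -, hΓG, hΓ1⟩ := hΓ
  obtain _ | m := N
  · exact hΓ1 rfl ▸ PosSemidef.one
  · exact hΓG m rfl ▸ posSemidef_idTensorO dO _ (hGpsd m m.lt_succ_self)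

lemma IsDualComb.trace_eq {Γ : CMat dO dI N} (hΓ : IsDualComb dO dI Γ) :
    Γ.trace = (∏ j, dO j : ℕ) := by
  obtain ⟨G, -, hG0, hG, hΓG, hΓ1⟩ := hΓ
  obtain _ | m := N
  · simp [hΓ1 rfl, card_cutIdx, cut]
  · rw [hΓG m rfl, castCMat, trace_idTensorO, trace_dualChain dO dI G hG0 hG m m.lt_succ_self,
      ← Nat.cast_mul, mul_comm]
    congr 1
    rw [← card_cutIdx_succ dO ⟨m, m.lt_succ_self⟩, card_cutIdx]
    exact Finset.prod_congr rfl fun j _ => if_pos j.isLt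

lemma IsDualComb.trace_mul_eq_one {Γ C : CMat dO dI N} (hΓ : IsDualComb dO dI Γ)
    (hC : IsQuantumComb dO dI C) : (Γ * C).trace = 1 := by
  obtain ⟨G, -, hG0, hG, hΓG, hΓ1⟩ := hΓ
  obtain ⟨-, Cn, -, rfl, hC0, hCn⟩ := hC
  obtain _ | m := N
  · rw [hΓ1 rfl, hC0, one_mul, trace_one_cutIdx_zero]
  · rw [hΓG m rfl]
    exact trace_dualChain_mul_combChain dO dI G hG0 hG Cn hC0 hCn m m.lt_succ_self

end Comb

section Spectral
open scoped MatrixOrder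
variable {ι : Type} [Fintype ι] [DecidableEq ι]

lemma msqrt_eq_cfcSqrt {A : Matrix ι ι ℂ} (hA : A.PosSemidef) : msqrt A = CFC.sqrt A := by
  rw [msqrt, dif_pos hA, CFC.sqrt_eq_cfc, cfc_nnreal_eq_real _ A, hA.1.cfc_eq, IsHermitian.cfc]
  congr 3
  funext i
  simp [max_eq_left (hA.eigenvalues_nonneg i)]

lemma traceNorm_eq_re_trace_abs (A : Matrix ι ι ℂ) : traceNorm A = (CFC.abs A).trace.re := by
  rw [CFC.abs, star_eq_conjTranspose, ← msqrt_eq_cfcSqrt (posSemidef_conjTranspose_mul_self A),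
    msqrt, dif_pos (posSemidef_conjTranspose_mul_self A)]
  rfl

lemma traceNorm_neg (A : Matrix ι ι ℂ) : traceNorm (-A) = traceNorm A := by
  simp only [traceNorm_eq_re_trace_abs, CFC.abs_neg]

lemma trace_mul_nonneg {A B : Matrix ι ι ℂ} (hA : 0 ≤ A) (hB : 0 ≤ B) : 0 ≤ (A * B).trace := by
  rw [← CFC.sqrt_mul_sqrt_self A, mul_assoc, trace_mul_comm, mul_assoc, ← mul_assoc]
  exact (conjugate_nonneg_of_nonneg hB (CFC.sqrt_nonneg A)).posSemidef.trace_nonneg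

lemma trace_mul_le_trace_mul {A A' B : Matrix ι ι ℂ} (hA : A ≤ A') (hB : 0 ≤ B) :
    (A * B).trace ≤ (A' * B).trace := by
  rw [← sub_nonneg, ← trace_sub, ← sub_mul]
  exact trace_mul_nonneg (sub_nonneg.2 hA) hB

lemma le_re_trace_smul_one {A : Matrix ι ι ℂ} (hA : 0 ≤ A) :
    A ≤ A.trace.re • (1 : Matrix ι ι ℂ) := by
  have hA' := hA.posSemidef
  rw [← Algebra.algebraMap_eq_smul_one]
  refine le_algebraMap_of_spectrum_le fun x hx => ?_
  obtain ⟨i, rfl⟩ := hA'.1.spectrum_real_eq_range_eigenvalues ▸ hx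
  rw [hA'.1.trace_eq_sum_eigenvalues, Complex.re_sum]
  simp only [Complex.coe_algebraMap, Complex.ofReal_re]
  exact Finset.single_le_sum (fun j _ => hA'.eigenvalues_nonneg j) (Finset.mem_univ i)

lemma trace_mul_le_re_trace_smul_trace {A B : Matrix ι ι ℂ} (hA : 0 ≤ A) (hB : 0 ≤ B) :
    (A * B).trace ≤ A.trace.re • B.trace := by
  simpa using trace_mul_le_trace_mul (le_re_trace_smul_one hA) hB

lemma exists_trace_mul_eq_traceNorm {X : Matrix ι ι ℂ} (hX : IsSelfAdjoint X) :
    ∃ S : Matrix ι ι ℂ, -1 ≤ S ∧ S ≤ 1 ∧ (S * X).trace.re = traceNorm X := by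
  have hcont : ContinuousOn (fun x : ℝ => (SignType.sign x : ℝ)) (spectrum ℝ X) :=
    X.finite_real_spectrum.continuousOn _
  refine ⟨cfc (fun x : ℝ => (SignType.sign x : ℝ)) X, ?_, ?_, ?_⟩
  · rw [show (-1 : Matrix ι ι ℂ) = algebraMap ℝ _ (-1) by simp]
    exact algebraMap_le_cfc _ _ X fun x _ => by
      rcases lt_trichotomy x 0 with h | h | h <;> simp [h]
  · exact cfc_le_one _ X fun x _ => by rcases lt_trichotomy x 0 with h | h | h <;> simp [h]
  · nth_rewrite 2 [← cfc_id' ℝ X]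
    rw [traceNorm_eq_re_trace_abs, CFC.abs_eq_cfc_norm X, ← cfc_mul _ _ X]
    simp_rw [Real.norm_eq_abs, sign_mul_self]

lemma re_trace_mul_le_of_neg_le_of_le {T Γ M : Matrix ι ι ℂ} (hΓT : -Γ ≤ T) (hTΓ : T ≤ Γ)
    (hΓ : 0 ≤ Γ) (hM : IsSelfAdjoint M) : (T * M).trace.re ≤ Γ.trace.re * traceNorm M := by
  have hpos := trace_mul_le_trace_mul hTΓ (CFC.posPart_nonneg M)
  have hneg := trace_mul_le_trace_mul (neg_le.1 hΓT) (CFC.negPart_nonneg M)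
  have hΓpos := trace_mul_le_re_trace_smul_trace hΓ (CFC.posPart_nonneg M)
  have hΓneg := trace_mul_le_re_trace_smul_trace hΓ (CFC.negPart_nonneg M)
  have key : (T * M).trace ≤ Γ.trace.re • (CFC.abs M).trace := by
    calc (T * M).trace = (T * M⁺).trace + (-T * M⁻).trace := by
          conv_lhs => rw [← CFC.posPart_sub_negPart M hM]
          rw [mul_sub, trace_sub, neg_mul, trace_neg, sub_eq_add_neg]
      _ ≤ Γ.trace.re • (M⁺).trace + Γ.trace.re • (M⁻).trace := by gcongr <;> order
      _ = Γ.trace.re • (CFC.abs M).trace := by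
          rw [← smul_add, ← trace_add, CFC.posPart_add_negPart M hM]
  simpa [traceNorm_eq_re_trace_abs] using Complex.re_le_re key

lemma traceNorm_sqrt_mul_mul_sqrt_le {Γ M : Matrix ι ι ℂ} (hΓ : 0 ≤ Γ) (hM : IsSelfAdjoint M) :
    traceNorm (CFC.sqrt Γ * M * CFC.sqrt Γ) ≤ Γ.trace.re * traceNorm M := by
  set R := CFC.sqrt Γ
  have hR : IsSelfAdjoint R := IsSelfAdjoint.of_nonneg (CFC.sqrt_nonneg Γ)
  obtain ⟨S, hS1, hS2, hS⟩ := exists_trace_mul_eq_traceNorm (hM.conjugate_self hR)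
  have hRR : R * R = Γ := CFC.sqrt_mul_sqrt_self Γ
  have hT1 : R * S * R ≤ Γ := by simpa [hRR] using hR.conjugate_le_conjugate hS2
  have hT2 : -Γ ≤ R * S * R := by simpa [hRR] using hR.conjugate_le_conjugate hS1
  have hcyc : (S * (R * M * R)).trace = (R * S * R * M).trace := by
    simp only [mul_assoc]
    rw [trace_mul_comm R]
    simp only [mul_assoc]
  rw [← hS, hcyc]
  exact re_trace_mul_le_of_neg_le_of_le hT2 hT1 hΓ hM

lemma conjTranspose_msqrt (A : Matrix ι ι ℂ) : (msqrt A)ᴴ = msqrt A := by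
  by_cases hA : A.PosSemidef
  · rw [msqrt_eq_cfcSqrt hA]
    exact (CFC.sqrt_nonneg A).posSemidef.1.eq
  · simp [msqrt, hA]

lemma msqrt_mul_msqrt {A : Matrix ι ι ℂ} (hA : A.PosSemidef) : msqrt A * msqrt A = A := by
  rw [msqrt_eq_cfcSqrt hA]
  exact CFC.sqrt_mul_sqrt_self A hA.nonneg

lemma traceNorm_msqrt_mul_mul_msqrt_le {Γ M : Matrix ι ι ℂ} (hΓ : Γ.PosSemidef)
    (hM : M.IsHermitian) : traceNorm (msqrt Γ * M * msqrt Γ) ≤ Γ.trace.re * traceNorm M := by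
  rw [msqrt_eq_cfcSqrt hΓ]
  exact traceNorm_sqrt_mul_mul_sqrt_le hΓ.nonneg hM

end Spectral

section Dmax
variable {ι : Type} [Fintype ι] [DecidableEq ι]

lemma DmaxSet_subset_conj (A B S : Matrix ι ι ℂ) :
    DmaxSet A B ⊆ DmaxSet (S * A * Sᴴ) (S * B * Sᴴ) := by
  rintro lam ⟨hlam, hpsd⟩
  refine ⟨hlam, ?_⟩
  convert hpsd.mul_mul_conjTranspose_same S using 1
  rw [mul_sub, sub_mul, Matrix.mul_smul, Matrix.smul_mul]

lemma re_trace_le_mul_of_mem_DmaxSet {A B : Matrix ι ι ℂ} {lam : ℝ} (h : lam ∈ DmaxSet A B) :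
    A.trace.re ≤ lam * B.trace.re := by
  have := Complex.re_le_re h.2.trace_nonneg
  simpa [trace_sub, trace_smul] using this

lemma Dmax_le_of_DmaxSet_subset {A B A' B' : Matrix ι ι ℂ} (hsub : DmaxSet A B ⊆ DmaxSet A' B')
    (hA' : 0 < A'.trace.re) : Dmax A' B' ≤ Dmax A B := by
  by_cases hne : (DmaxSet A B).Nonempty
  · obtain ⟨lam₀, hlam₀⟩ := hne.mono hsub
    -- `logb 2` is monotone only on positive reals, so `sInf (DmaxSet A' B')` is bounded away
    -- from `0` using `Tr A' ≤ λ Tr B'`.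
    have hB' : 0 < B'.trace.re := pos_of_mul_pos_right
      (hA'.trans_le (re_trace_le_mul_of_mem_DmaxSet hlam₀)) hlam₀.1
    have hlb : ∀ lam ∈ DmaxSet A' B', A'.trace.re / B'.trace.re ≤ lam := fun lam h =>
      (div_le_iff₀ hB').2 (re_trace_le_mul_of_mem_DmaxSet h)
    rw [Dmax, Dmax, if_pos hne, if_pos ⟨lam₀, hlam₀⟩, EReal.coe_le_coe_iff]
    exact Real.logb_le_logb_of_le one_lt_two
      ((div_pos hA' hB').trans_le (le_csInf ⟨lam₀, hlam₀⟩ hlb))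
      (csInf_le_csInf ⟨0, fun _ h => h.1⟩ hne hsub)
  · rw [show Dmax A B = ⊤ from if_neg hne]
    exact le_top

end Dmax

theorem dmaxTilde_le_dmaxSmooth_general {N : ℕ} (dO dI : Fin N → ℕ) (C0 C1 : CMat dO dI N)
    (h0 : IsQuantumComb dO dI C0)
    (ε : ℝ) :
    DmaxTilde dO dI (ε * ∏ j, (dO j : ℝ)) C0 C1 ≤ DmaxSmoothComb dO dI ε C0 C1 := by
  refine sSup_le fun _ ⟨Γ, hΓ, hx⟩ => le_sInf fun _ ⟨C, hC, hCC0, hy⟩ => ?_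
  subst hx hy
  set R := msqrt Γ
  have hR : Rᴴ = R := conjTranspose_msqrt Γ
  have hRCR : (R * C * R).PosSemidef := by
    simpa only [hR] using hC.1.mul_mul_conjTranspose_same R
  have htr : (R * C * R).trace = 1 := by
    rw [trace_mul_comm, ← mul_assoc, msqrt_mul_msqrt hΓ.posSemidef, hΓ.trace_mul_eq_one hC]
  have hsub : DmaxSet C C1 ⊆ DmaxSet (R * C * R) (R * C1 * R) := by
    simpa only [hR] using DmaxSet_subset_conj C C1 R
  refine sInf_le_of_le ⟨R * C * R, hRCR, htr, ?_, rfl⟩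
    (Dmax_le_of_DmaxSet_subset hsub (by simp [htr]))
  calc traceNorm (R * C0 * R - R * C * R) = traceNorm (R * (C0 - C) * R) := by
        rw [mul_sub, sub_mul]
    _ ≤ Γ.trace.re * traceNorm (C0 - C) :=
        traceNorm_msqrt_mul_mul_msqrt_le hΓ.posSemidef (h0.1.1.sub hC.1.1)
    _ = (∏ j, (dO j : ℝ)) * traceNorm (C - C0) := by
        rw [hΓ.trace_eq, Complex.natCast_re, Nat.cast_prod, ← traceNorm_neg, neg_sub]
    _ ≤ (∏ j, (dO j : ℝ)) * (2 * ε) :=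
        mul_le_mul_of_nonneg_left hCC0 (Finset.prod_nonneg fun j _ => Nat.cast_nonneg _)
    _ = 2 * (ε * ∏ j, (dO j : ℝ)) := by ring

/-- For quantum combs `C₀, C₁` and `ε ∈ (0,1)`,
`D̃_max^{εD}(C₀‖C₁) ≤ D_max^ε(C₀‖C₁)` where `D = ∏_j dim H_j^out`. -/
theorem dmaxTilde_le_dmaxSmooth {N : ℕ} (dO dI : Fin N → ℕ) (C0 C1 : CMat dO dI N)
    (h0 : IsQuantumComb dO dI C0) (h1 : IsQuantumComb dO dI C1)
    (ε : ℝ) (hε : ε ∈ Set.Ioo (0 : ℝ) 1) :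
    DmaxTilde dO dI (ε * ∏ j, (dO j : ℝ)) C0 C1 ≤ DmaxSmoothComb dO dI ε C0 C1 :=
  dmaxTilde_le_dmaxSmooth_general dO dI C0 C1 h0 ε

end QComb
end
end

section
/- Let M be an operator on H_1 ⊗ H_0 and N an operator on H_2 ⊗ H_1. If M and N are both Hermitian, then their link product N * M = Tr_{H_1}[(I_{H_2} ⊗ M^{T_1})(N ⊗ I_{H_0})] is Hermitian. -/
open Matrix
open scoped ComplexOrder

noncomputable section

namespace QLink

/-- Kronecker (tensor) product of two square matrices, on the product index set. -/
def kron {α β : Type} (A : Matrix α α ℂ) (B : Matrix β β ℂ) :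
    Matrix (α × β) (α × β) ℂ := fun p q => A p.1 q.1 * B p.2 q.2

/-- Partial transpose on the first tensor factor. -/
def ptransposeFst {α β : Type} (M : Matrix (α × β) (α × β) ℂ) : Matrix (α × β) (α × β) ℂ :=
  fun p q => M (q.1, p.2) (p.1, q.2)

/-- Partial transpose on the second tensor factor. -/
def ptransposeSnd {α β : Type} (M : Matrix (α × β) (α × β) ℂ) : Matrix (α × β) (α × β) ℂ :=
  fun p q => M (p.1, q.2) (q.1, p.2)

/-- Partial trace over the middle tensor factor. -/
def ptraceMid {α β γ : Type} [Fintype β] (X : Matrix (α × β × γ) (α × β × γ) ℂ) :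
    Matrix (α × γ) (α × γ) ℂ :=
  fun p q => ∑ b : β, X (p.1, b, p.2) (q.1, b, q.2)

/-- Partial trace over the first tensor factor. -/
def ptraceFst {α β : Type} [Fintype α] (X : Matrix (α × β) (α × β) ℂ) : Matrix β β ℂ :=
  fun p q => ∑ a : α, X (a, p) (a, q)

/-- The link product `N * M = Tr_{H₁}[(I_{H₂} ⊗ M^{T₁})(N ⊗ I_{H₀})]`, an operator on
`H₂ ⊗ H₀`, for `M` on `H₁ ⊗ H₀` and `N` on `H₂ ⊗ H₁`. -/
def linkNM {α0 α1 α2 : Type} [Fintype α0] [Fintype α1] [Fintype α2]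
    [DecidableEq α0] [DecidableEq α1] [DecidableEq α2]
    (Nm : Matrix (α2 × α1) (α2 × α1) ℂ) (M : Matrix (α1 × α0) (α1 × α0) ℂ) :
    Matrix (α2 × α0) (α2 × α0) ℂ :=
  ptraceMid ((kron (1 : Matrix α2 α2 ℂ) (ptransposeFst M)) *
    (Matrix.reindex (Equiv.prodAssoc α2 α1 α0) (Equiv.prodAssoc α2 α1 α0)
      (kron Nm (1 : Matrix α0 α0 ℂ))))

/-- The cyclic reordering `H₁ ⊗ H₀ ⊗ H₂ ≃ H₀ ⊗ H₂ ⊗ H₁`. -/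
def cyc (α1 α0 α2 : Type) : α1 × α0 × α2 ≃ α0 × α2 × α1 where
  toFun p := (p.2.1, p.2.2, p.1)
  invFun p := (p.2.2, p.1, p.2.1)
  left_inv p := rfl
  right_inv p := rfl

/-- The link product `M * N = Tr_{H₁}[(I_{H₀} ⊗ N^{T₁})(M ⊗ I_{H₂})]`, an operator on
`H₀ ⊗ H₂`, for `M` on `H₁ ⊗ H₀` and `N` on `H₂ ⊗ H₁` (here `N^{T₁}` is the partial
transpose of `N` on its `H₁` factor). -/
def linkMN {α0 α1 α2 : Type} [Fintype α0] [Fintype α1] [Fintype α2]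
    [DecidableEq α0] [DecidableEq α1] [DecidableEq α2]
    (M : Matrix (α1 × α0) (α1 × α0) ℂ) (Nm : Matrix (α2 × α1) (α2 × α1) ℂ) :
    Matrix (α0 × α2) (α0 × α2) ℂ :=
  ptraceFst ((Matrix.reindex (cyc α1 α0 α2).symm (cyc α1 α0 α2).symm
      (kron (1 : Matrix α0 α0 ℂ) (ptransposeSnd Nm))) *
    (Matrix.reindex (Equiv.prodAssoc α1 α0 α2) (Equiv.prodAssoc α1 α0 α2)
      (kron M (1 : Matrix α2 α2 ℂ))))

/-- `𝓜 ⊗ id_{L(K)}` applied to an operator on `H₀ ⊗ K`. -/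
def mapTensorId {α0 α1 : Type} (f : Matrix α0 α0 ℂ →ₗ[ℂ] Matrix α1 α1 ℂ) (K : Type)
    (X : Matrix (α0 × K) (α0 × K) ℂ) : Matrix (α1 × K) (α1 × K) ℂ :=
  fun p q => f (fun x y => X (x, p.2) (y, q.2)) p.1 q.1

/-- The unnormalized maximally entangled vector `|Ψ⟩ = Σ_i |i⟩|i⟩` on `H₀ ⊗ H₀`. -/
def maxEntVec (α0 : Type) [DecidableEq α0] : α0 × α0 → ℂ :=
  fun p => if p.1 = p.2 then 1 else 0

/-- The Choi-Jamiolkowski operator `M = (𝓜 ⊗ id)(|Ψ⟩⟨Ψ|)` of a linear map `𝓜`. -/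
def choi {α0 α1 : Type} [DecidableEq α0]
    (f : Matrix α0 α0 ℂ →ₗ[ℂ] Matrix α1 α1 ℂ) : Matrix (α1 × α0) (α1 × α0) ℂ :=
  mapTensorId f α0 (Matrix.vecMulVec (maxEntVec α0) (star (maxEntVec α0)))

section LinkProduct

variable {α0 α1 α2 : Type} [Fintype α0] [Fintype α1] [Fintype α2]
  [DecidableEq α0] [DecidableEq α1] [DecidableEq α2]
  (Nm : Matrix (α2 × α1) (α2 × α1) ℂ) (M : Matrix (α1 × α0) (α1 × α0) ℂ)

lemma linkNM_apply (p q : α2 × α0) :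
    linkNM Nm M p q = ∑ b : α1, ∑ k : α1, M (k, p.2) (b, q.2) * Nm (p.1, k) (q.1, b) := by
  simp only [linkNM, ptraceMid, Matrix.mul_apply, kron, ptransposeFst, Matrix.reindex_apply,
    Matrix.submatrix_apply, Equiv.prodAssoc_symm_apply, Fintype.sum_prod_type, Matrix.one_apply,
    ite_mul, one_mul, zero_mul, mul_ite, mul_one, mul_zero, Finset.sum_ite_irrel,
    Finset.sum_const_zero, Finset.sum_ite_eq, Finset.sum_ite_eq', Finset.mem_univ, if_true]

lemma conjTranspose_linkNM : (linkNM Nm M)ᴴ = linkNM Nmᴴ Mᴴ := by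
  ext p q
  simp only [conjTranspose_apply, linkNM_apply, star_sum, star_mul']
  exact Finset.sum_comm

end LinkProduct

/-- The link product of Hermitian operators is Hermitian. -/
theorem linkNM_isHermitian {α0 α1 α2 : Type} [Fintype α0] [Fintype α1] [Fintype α2]
    [DecidableEq α0] [DecidableEq α1] [DecidableEq α2]
    (M : Matrix (α1 × α0) (α1 × α0) ℂ) (Nm : Matrix (α2 × α1) (α2 × α1) ℂ)
    (hM : M.IsHermitian) (hN : Nm.IsHermitian) :
    (linkNM Nm M).IsHermitian := by
  rw [IsHermitian, conjTranspose_linkNM, hN.eq, hM.eq]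

end QLink
end
end

section
/- Let M be an operator on H_1 ⊗ H_0 and N an operator on H_2 ⊗ H_1. If M and N are both positive semidefinite, then their link product N * M = Tr_{H_1}[(I_{H_2} ⊗ M^{T_1})(N ⊗ I_{H_0})] is positive semidefinite. -/
open Matrix
open scoped ComplexOrder

noncomputable section

namespace QLink

/-! The link product is a compression of the Kronecker product: with `|Ψ⟩ = Σ_e |e⟩|e⟩` on the two
copies of `H₁` and `V = I_{H₂} ⊗ |Ψ⟩ ⊗ I_{H₀}` (`maxEntMiddle`), one has `N * M = V† (N ⊗ M) V`.
Kronecker products and compressions of positive semidefinite matrices are positive semidefinite. -/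

open scoped Kronecker

def maxEntMiddle (α0 α1 α2 : Type) [DecidableEq α0] [DecidableEq α1] [DecidableEq α2] :
    Matrix ((α2 × α1) × (α1 × α0)) (α2 × α0) ℂ :=
  of fun i p => if i.1.1 = p.1 ∧ i.1.2 = i.2.1 ∧ i.2.2 = p.2 then 1 else 0

section Compression

variable {α0 α1 α2 ι : Type} [Fintype α0] [Fintype α1] [Fintype α2]
  [DecidableEq α0] [DecidableEq α1] [DecidableEq α2]

lemma linkNM_apply_s14 (Nm : Matrix (α2 × α1) (α2 × α1) ℂ) (M : Matrix (α1 × α0) (α1 × α0) ℂ)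
    (c c' : α2) (a a' : α0) :
    linkNM Nm M (c, a) (c', a') = ∑ b : α1, ∑ e : α1, Nm (c, e) (c', b) * M (e, a) (b, a') := by
  simp [linkNM, ptraceMid, kron, ptransposeFst, mul_apply, Fintype.sum_prod_type, one_apply,
    mul_comm]

lemma mul_maxEntMiddle_apply (X : Matrix ι ((α2 × α1) × (α1 × α0)) ℂ) (i : ι) (c : α2) (a : α0) :
    (X * maxEntMiddle α0 α1 α2) i (c, a) = ∑ e, X i ((c, e), (e, a)) := by
  simp [maxEntMiddle, mul_apply, Fintype.sum_prod_type, ite_and]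

lemma conjTranspose_maxEntMiddle_mul_apply (X : Matrix ((α2 × α1) × (α1 × α0)) ι ℂ)
    (c : α2) (a : α0) (j : ι) :
    ((maxEntMiddle α0 α1 α2)ᴴ * X) (c, a) j = ∑ e, X ((c, e), (e, a)) j := by
  rw [← conjTranspose_conjTranspose X, ← conjTranspose_mul, conjTranspose_apply,
    mul_maxEntMiddle_apply, star_sum]
  simp only [conjTranspose_apply, star_star]

lemma linkNM_eq_conjTranspose_mul_kronecker_mul (Nm : Matrix (α2 × α1) (α2 × α1) ℂ)
    (M : Matrix (α1 × α0) (α1 × α0) ℂ) :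
    linkNM Nm M = (maxEntMiddle α0 α1 α2)ᴴ * (Nm ⊗ₖ M) * maxEntMiddle α0 α1 α2 := by
  ext ⟨c, a⟩ ⟨c', a'⟩
  simp only [linkNM_apply_s14, mul_maxEntMiddle_apply, conjTranspose_maxEntMiddle_mul_apply,
    kroneckerMap_apply]

end Compression

/-- The link product of positive semidefinite operators is positive
semidefinite. -/
theorem linkNM_posSemidef {α0 α1 α2 : Type} [Fintype α0] [Fintype α1] [Fintype α2]
    [DecidableEq α0] [DecidableEq α1] [DecidableEq α2]
    (M : Matrix (α1 × α0) (α1 × α0) ℂ) (Nm : Matrix (α2 × α1) (α2 × α1) ℂ)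
    (hM : M.PosSemidef) (hN : Nm.PosSemidef) :
    (linkNM Nm M).PosSemidef := by
  rw [linkNM_eq_conjTranspose_mul_kronecker_mul]
  exact (hN.kronecker hM).conjTranspose_mul_mul_same _

end QLink
end
end

section
/- Let 𝓜 be a linear map from operators on H_0 to operators on H_1 with Choi–Jamiołkowski operator M. Then 𝓜 is completely positive (i.e., for every finite-dimensional Hilbert space K, the map 𝓜 ⊗ id_{L(K)} sends positive semidefinite operators on H_0 ⊗ K to positive semidefinite operators on H_1 ⊗ K) if and only if M is positive semidefinite. -/
open Matrix
open scoped ComplexOrder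

noncomputable section

namespace QLink

/-!
For `K = H₀` and `X = |Ψ⟩⟨Ψ|`, the operator `(𝓜 ⊗ id)(X)` is the Choi operator itself. Conversely,
`(𝓜 ⊗ id)(X) = V† (M ⊗ X) V` for `V = I_{H₁} ⊗ |Ψ⟩ ⊗ I_K`, which contracts the
two middle copies of `H₀`; a compression of the Kronecker product of two positive semidefinite
matrices is positive semidefinite.
-/

open scoped Kronecker

/-- `I_{H₁} ⊗ |Ψ⟩ ⊗ I_K : H₁ ⊗ K → (H₁ ⊗ H₀) ⊗ (H₀ ⊗ K)`, with `|Ψ⟩` placed on the two middle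
factors. -/
def insertMaxEnt (α1 α0 K : Type) [DecidableEq α1] [DecidableEq α0] [DecidableEq K] :
    Matrix ((α1 × α0) × (α0 × K)) (α1 × K) ℂ :=
  Matrix.of fun p q => (1 : Matrix α1 α1 ℂ) p.1.1 q.1 * maxEntVec α0 (p.1.2, p.2.1) *
    (1 : Matrix K K ℂ) p.2.2 q.2

lemma choi_apply {α0 α1 : Type} [DecidableEq α0]
    (f : Matrix α0 α0 ℂ →ₗ[ℂ] Matrix α1 α1 ℂ) (i j : α0) (m n : α1) :
    choi f (m, i) (n, j) = f (single i j 1) m n := by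
  have hblock : (fun x y => vecMulVec (maxEntVec α0) (star (maxEntVec α0)) (x, i) (y, j) :
      Matrix α0 α0 ℂ) = single i j 1 := by
    ext x y
    simp only [vecMulVec, maxEntVec, single, of_apply, Pi.star_apply]
    split_ifs <;> simp_all
  exact congrFun (congrFun (congrArg f hblock) m) n

lemma mapTensorId_apply_eq_sum_choi {α0 α1 K : Type} [Fintype α0] [DecidableEq α0]
    (f : Matrix α0 α0 ℂ →ₗ[ℂ] Matrix α1 α1 ℂ) (X : Matrix (α0 × K) (α0 × K) ℂ)
    (m n : α1) (a b : K) :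
    mapTensorId f K X (m, a) (n, b) = ∑ i, ∑ j, choi f (m, i) (n, j) * X (i, a) (j, b) := by
  simp only [choi_apply, mapTensorId]
  conv_lhs => rw [matrix_eq_sum_single (fun x y => X (x, a) (y, b) : Matrix α0 α0 ℂ)]
  simp only [Matrix.sum_apply, map_sum]
  refine Finset.sum_congr rfl fun i _ => Finset.sum_congr rfl fun j _ => ?_
  rw [show single i j (X (i, a) (j, b)) = X (i, a) (j, b) • single i j 1 by
    rw [smul_single, smul_eq_mul, mul_one], map_smul, Matrix.smul_apply, smul_eq_mul, mul_comm]

lemma mapTensorId_eq_conjTranspose_mul_choi_kronecker_mul {α0 α1 K : Type}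
    [Fintype α0] [Fintype α1] [Fintype K] [DecidableEq α0] [DecidableEq α1] [DecidableEq K]
    (f : Matrix α0 α0 ℂ →ₗ[ℂ] Matrix α1 α1 ℂ) (X : Matrix (α0 × K) (α0 × K) ℂ) :
    mapTensorId f K X = (insertMaxEnt α1 α0 K)ᴴ * (choi f ⊗ₖ X) * insertMaxEnt α1 α0 K := by
  ext ⟨m, a⟩ ⟨n, b⟩
  rw [mapTensorId_apply_eq_sum_choi, Finset.sum_comm]
  simp [insertMaxEnt, mul_apply, Fintype.sum_prod_type, one_apply, maxEntVec, kroneckerMap_apply,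
    apply_ite (starRingEnd ℂ), ite_mul]

/-- A linear map `𝓜` is completely positive iff its Choi-Jamiolkowski
operator is positive semidefinite. -/
theorem completelyPositive_iff_choi_posSemidef {α0 α1 : Type} [Fintype α0] [Fintype α1]
    [DecidableEq α0] [DecidableEq α1]
    (f : Matrix α0 α0 ℂ →ₗ[ℂ] Matrix α1 α1 ℂ) :
    (∀ (K : Type) [Fintype K] [DecidableEq K],
        ∀ X : Matrix (α0 × K) (α0 × K) ℂ, X.PosSemidef → (mapTensorId f K X).PosSemidef) ↔
      (choi f).PosSemidef := by
  refine ⟨fun hf => hf α0 _ (posSemidef_vecMulVec_self_star _), fun hchoi K _ _ X hX => ?_⟩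
  rw [mapTensorId_eq_conjTranspose_mul_choi_kronecker_mul]
  exact (hchoi.kronecker hX).conjTranspose_mul_mul_same _

end QLink
end
end
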